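/- Let n and r be positive integers with 2r ≤ n < (r²+r)/2. Then the base size b of the symmetric group S_n acting on the set of r-element subsets of [n] satisfies b ≥ (3(2n + r − 5/4) + r²)^{1/2} − r − 3/2, equivalently n ≤ (b² + (2r+3)b)/6 + 1. -/

import Mathlib

/-- `𝓑` is a base for the symmetric group `S_n` acting on `r`-element subsets of `[n]`. -/
def IsBaseSym (n r : ℕ) (𝓑 : Finset (Finset (Fin n))) : Prop :=
  (∀ B ∈ 𝓑, B.card = r) ∧
    ∀ σ : Equiv.Perm (Fin n), (∀ B ∈ 𝓑, B.image σ = B) → σ = 1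

/-- The base size of `S_n` acting on `r`-element subsets of `[n]`. -/
noncomputable def baseSizeSym (n r : ℕ) : ℕ :=
  sInf {l : ℕ | ∃ 𝓑 : Finset (Finset (Fin n)), IsBaseSym n r 𝓑 ∧ 𝓑.card = l}

open Finset

lemma mem_iff_of_image_eq {n : ℕ} (σ : Equiv.Perm (Fin n)) {B : Finset (Fin n)}
    (h : B.image σ = B) (x : Fin n) : σ x ∈ B ↔ x ∈ B := by
  constructor
  · intro hx
    rw [← h] at hx
    obtain ⟨y, hy, hyx⟩ := Finset.mem_image.mp hx
    rwa [← σ.injective hyx]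
  · intro hx
    rw [← h]; exact Finset.mem_image_of_mem _ hx


lemma perm_val_le {n r : ℕ} (hr : 0 < r) (h2r : 2 * r ≤ n) (σ : Equiv.Perm (Fin n))
    (hmem : ∀ i ≤ n - r, ∀ x : Fin n,
      (i ≤ (σ x).val ∧ (σ x).val < i + r) ↔ (i ≤ x.val ∧ x.val < i + r)) :
    ∀ x : Fin n, x.val ≤ (σ x).val := by
  have Q : ∀ m k, n - k ≤ m → ∀ x : Fin n, k ≤ x.val → k ≤ (σ x).val := by
    intro m
    induction m with
    | zero =>
      intro k hk x hx
      have := x.isLt; omega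
    | succ m IH =>
      intro k hk x hx
      have hxlt := x.isLt
      have hslt := (σ x).isLt
      by_cases hcase : n - r ≤ k
      · have h1 : n - r ≤ (σ x).val ∧ (σ x).val < (n - r) + r :=
          (hmem (n - r) le_rfl x).mpr (by omega)
        have h2 : ¬ ((k - r) ≤ (σ x).val ∧ (σ x).val < (k - r) + r) :=
          fun hc => by
            have := (hmem (k - r) (by omega) x).mp hc
            omega
        omega
      · rcases Nat.lt_or_ge k x.val with hlt | hge
        · have := IH (k+1) (by omega) x (by omega); omega
        · have h1 : k ≤ (σ x).val ∧ (σ x).val < k + r :=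
            (hmem k (by omega) x).mpr (by omega)
          omega
  exact fun x => Q n x.val (by have := x.isLt; omega) x le_rfl

lemma exists_base (n r : ℕ) (hr : 0 < r) (h2r : 2 * r ≤ n) :
    ∃ 𝓑 : Finset (Finset (Fin n)), IsBaseSym n r 𝓑 := by
  set Bi : ℕ → Finset (Fin n) := fun i => univ.filter (fun x => i ≤ x.val ∧ x.val < i + r)
    with hBi
  refine ⟨(Finset.range (n - r + 1)).image Bi, ?_, ?_⟩
  · rintro B hB
    obtain ⟨i, hi, rfl⟩ := Finset.mem_image.mp hB
    rw [Finset.mem_range] at hi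
    have hin : i + r ≤ n := by omega
    have himg : (Bi i).image Fin.val = Finset.Ico i (i + r) := by
      ext m
      simp only [hBi, Finset.mem_image, Finset.mem_filter, Finset.mem_univ, true_and,
        Finset.mem_Ico]
      constructor
      · rintro ⟨x, hx, rfl⟩; exact hx
      · rintro ⟨h1, h2⟩; exact ⟨⟨m, by omega⟩, ⟨h1, h2⟩, rfl⟩
    have := congrArg Finset.card himg
    rwa [Finset.card_image_of_injective _ Fin.val_injective, Nat.card_Ico,
      Nat.add_sub_cancel_left] at this
  · intro σ hσ
    have hmem : ∀ i ≤ n - r, ∀ x : Fin n,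
        (i ≤ (σ x).val ∧ (σ x).val < i + r) ↔ (i ≤ x.val ∧ x.val < i + r) := by
      intro i hi x
      have hB : (Bi i).image σ = Bi i := hσ _ (Finset.mem_image_of_mem _ (by
        simpa using Nat.lt_succ_of_le hi))
      have := mem_iff_of_image_eq σ hB x
      simpa [hBi] using this
    have Qσ : ∀ x : Fin n, x.val ≤ (σ x).val := perm_val_le hr h2r σ hmem
    have hmem' : ∀ i ≤ n - r, ∀ x : Fin n,
        (i ≤ (σ.symm x).val ∧ (σ.symm x).val < i + r) ↔ (i ≤ x.val ∧ x.val < i + r) := by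
      intro i hi x
      have := (hmem i hi (σ.symm x)).symm
      simpa using this
    have Qτ : ∀ x : Fin n, x.val ≤ (σ.symm x).val := perm_val_le hr h2r σ.symm hmem'
    have : ∀ x : Fin n, σ x = x := by
      intro x
      have h1 := Qσ x
      have h2 := Qτ (σ x)
      simp only [Equiv.symm_apply_apply] at h2
      exact Fin.ext (le_antisymm h2 h1)
    exact Equiv.ext this

lemma base_count_bound (n r : ℕ) (𝓑 : Finset (Finset (Fin n))) (h : IsBaseSym n r 𝓑) :
    6 * n ≤ 𝓑.card ^ 2 + (2 * r + 3) * 𝓑.card + 6 := by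
  classical
  set b := 𝓑.card with hb
  set s : Fin n → Finset (Finset (Fin n)) := fun x => 𝓑.filter (fun B => x ∈ B) with hs
  -- injectivity of signatures
  have hinj : Function.Injective s := by
    intro x y hxy
    by_contra hne
    have hiff : ∀ B ∈ 𝓑, x ∈ B ↔ y ∈ B := by
      intro B hB
      constructor
      · intro hx
        have : B ∈ s x := Finset.mem_filter.mpr ⟨hB, hx⟩
        rw [hxy] at this
        exact (Finset.mem_filter.mp this).2
      · intro hy
        have : B ∈ s y := Finset.mem_filter.mpr ⟨hB, hy⟩
        rw [← hxy] at this
        exact (Finset.mem_filter.mp this).2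
    have hfix : ∀ B ∈ 𝓑, B.image (Equiv.swap x y) = B := by
      intro B hB
      ext z
      simp only [Finset.mem_image]
      constructor
      · rintro ⟨w, hw, rfl⟩
        rcases eq_or_ne w x with rfl | hwx
        · rw [Equiv.swap_apply_left]; exact (hiff _ hB).mp hw
        rcases eq_or_ne w y with rfl | hwy
        · rw [Equiv.swap_apply_right]; exact (hiff _ hB).mpr hw
        · rwa [Equiv.swap_apply_of_ne_of_ne hwx hwy]
      · intro hz
        refine ⟨Equiv.swap x y z, ?_, Equiv.swap_apply_self x y z⟩
        rcases eq_or_ne z x with rfl | hzx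
        · rw [Equiv.swap_apply_left]; exact (hiff _ hB).mp hz
        rcases eq_or_ne z y with rfl | hzy
        · rw [Equiv.swap_apply_right]; exact (hiff _ hB).mpr hz
        · rwa [Equiv.swap_apply_of_ne_of_ne hzx hzy]
    exact hne (Equiv.swap_eq_one_iff.mp (h.2 _ hfix))
  -- total weight
  have hsum : ∑ x : Fin n, (s x).card = r * b := by
    have : ∀ x : Fin n, (s x).card = ∑ B ∈ 𝓑, if x ∈ B then 1 else 0 := by
      intro x; rw [hs]; exact Finset.card_filter _ _
    calc ∑ x : Fin n, (s x).card = ∑ x : Fin n, ∑ B ∈ 𝓑, if x ∈ B then 1 else 0 := by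
          exact Finset.sum_congr rfl (fun x _ => this x)
      _ = ∑ B ∈ 𝓑, ∑ x : Fin n, if x ∈ B then 1 else 0 := Finset.sum_comm
      _ = ∑ B ∈ 𝓑, B.card := by
          refine Finset.sum_congr rfl (fun B hB => ?_)
          rw [← Finset.card_filter, Finset.filter_mem_eq_inter, Finset.univ_inter]
      _ = r * b := by
          rw [Finset.sum_congr rfl (fun B hB => h.1 B hB), Finset.sum_const, hb,
            smul_eq_mul, mul_comm]
  -- level set bounds
  have hlevel : ∀ j, (univ.filter (fun x : Fin n => (s x).card = j)).card ≤ Nat.choose b j := by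
    intro j
    have := Finset.card_le_card_of_injOn
      (s := univ.filter (fun x : Fin n => (s x).card = j))
      (t := 𝓑.powersetCard j) s
      (fun x hx => by
        rw [Finset.mem_coe, Finset.mem_powersetCard]
        exact ⟨Finset.filter_subset _ _, (Finset.mem_filter.mp (Finset.mem_coe.mp hx)).2⟩)
      (fun x _ y _ hxy => hinj hxy)
    rwa [Finset.card_powersetCard, ← hb] at this
  -- pointwise inequality and summation
  have hpt : ∀ x : Fin n, 3 ≤ (s x).card
      + (3 * if (s x).card = 0 then 1 else 0)
      + (2 * if (s x).card = 1 then 1 else 0)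
      + (if (s x).card = 2 then 1 else 0) := by
    intro x
    rcases Nat.lt_or_ge (s x).card 3 with h3 | h3
    · interval_cases h : (s x).card <;> simp
    · omega
  have hsum3 : 3 * n ≤ r * b + 3 * Nat.choose b 0 + 2 * Nat.choose b 1 + Nat.choose b 2 := by
    have h1 : 3 * n = ∑ _x : Fin n, 3 := by simp [mul_comm]
    have h2 : ∑ _x : Fin n, 3 ≤ ∑ x : Fin n, ((s x).card
        + (3 * if (s x).card = 0 then 1 else 0)
        + (2 * if (s x).card = 1 then 1 else 0)
        + (if (s x).card = 2 then 1 else 0)) :=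
      Finset.sum_le_sum (fun x _ => hpt x)
    have h3 : ∑ x : Fin n, ((s x).card
        + (3 * if (s x).card = 0 then 1 else 0)
        + (2 * if (s x).card = 1 then 1 else 0)
        + (if (s x).card = 2 then 1 else 0))
        = r * b
          + 3 * (univ.filter (fun x : Fin n => (s x).card = 0)).card
          + 2 * (univ.filter (fun x : Fin n => (s x).card = 1)).card
          + (univ.filter (fun x : Fin n => (s x).card = 2)).card := by
      rw [Finset.sum_add_distrib, Finset.sum_add_distrib, Finset.sum_add_distrib,
        ← Finset.mul_sum, ← Finset.mul_sum, hsum, ← Finset.card_filter, ← Finset.card_filter,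
        ← Finset.card_filter]
    rw [h1]
    refine le_trans h2 ?_
    rw [h3]
    have l0 := hlevel 0
    have l1 := hlevel 1
    have l2 := hlevel 2
    omega
  have hch : 2 * Nat.choose b 2 = b * (b - 1) := by
    rw [Nat.choose_two_right, Nat.two_mul_div_two_of_even]
    rcases b with _ | m
    · simp
    · simpa [Nat.succ_sub_one, mul_comm] using Nat.even_mul_succ_self m
  have h1 := Nat.choose_one_right b
  have h0 := Nat.choose_zero_right b
  have hbb : b * (b - 1) + b = b * b := by
    rcases b with _ | m
    · simp
    · simp only [Nat.succ_sub_one]; ring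
  have hgoal : 6 * n ≤ b * b + (2 * r + 3) * b + 6 := by
    rw [h0, h1] at hsum3
    nlinarith [hsum3, hch, hbb]
  rwa [pow_two]

/-- If `2r ≤ n < (r² + r)/2` then the base size `b` of `S_n` acting on `r`-subsets
of `[n]` satisfies `b ≥ (3(2n + r − 5/4) + r²)^{1/2} − r − 3/2`, and equivalently
`n ≤ (b² + (2r + 3)b)/6 + 1`. -/
theorem baseSize_lower_bound (n r : ℕ) (hn : 0 < n) (hr : 0 < r) (h2r : 2 * r ≤ n)
    (hup : (n : ℚ) < ((r : ℚ) ^ 2 + r) / 2) :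
    Real.sqrt (3 * (2 * (n : ℝ) + r - 5 / 4) + (r : ℝ) ^ 2) - r - 3 / 2 ≤
      (baseSizeSym n r : ℝ) ∧
    (n : ℚ) ≤ ((baseSizeSym n r : ℚ) ^ 2 + (2 * r + 3) * (baseSizeSym n r : ℚ)) / 6
      + 1 := by
  classical
  obtain ⟨𝓑e, hbe⟩ := exists_base n r hr h2r
  have hne : {l : ℕ | ∃ 𝓑 : Finset (Finset (Fin n)), IsBaseSym n r 𝓑 ∧ 𝓑.card = l}.Nonempty :=
    ⟨𝓑e.card, 𝓑e, hbe, rfl⟩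
  have hmem := Nat.sInf_mem hne
  obtain ⟨𝓑, hbase, hcard⟩ := hmem
  have hkey : 6 * n ≤ (baseSizeSym n r) ^ 2 + (2 * r + 3) * (baseSizeSym n r) + 6 := by
    have := base_count_bound n r 𝓑 hbase
    rwa [hcard] at this
  constructor
  · have hkeyR : (6 : ℝ) * n ≤ (baseSizeSym n r : ℝ) ^ 2
        + (2 * r + 3) * (baseSizeSym n r : ℝ) + 6 := by
      exact_mod_cast hkey
    set x : ℝ := (baseSizeSym n r : ℝ) with hx
    have hx0 : (0 : ℝ) ≤ x := Nat.cast_nonneg _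
    have hr0 : (0 : ℝ) ≤ (r : ℝ) := Nat.cast_nonneg _
    have hsq : 3 * (2 * (n : ℝ) + r - 5 / 4) + (r : ℝ) ^ 2 ≤ (x + r + 3 / 2) ^ 2 := by
      nlinarith [hkeyR]
    have h1 : Real.sqrt (3 * (2 * (n : ℝ) + r - 5 / 4) + (r : ℝ) ^ 2) ≤ x + r + 3 / 2 := by
      calc Real.sqrt (3 * (2 * (n : ℝ) + r - 5 / 4) + (r : ℝ) ^ 2)
          ≤ Real.sqrt ((x + r + 3 / 2) ^ 2) := Real.sqrt_le_sqrt hsq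
        _ = |x + r + 3 / 2| := Real.sqrt_sq_eq_abs _
        _ = x + r + 3 / 2 := abs_of_nonneg (by linarith)
    linarith
  · have hkeyQ : (6 : ℚ) * n ≤ (baseSizeSym n r : ℚ) ^ 2
        + (2 * r + 3) * (baseSizeSym n r : ℚ) + 6 := by
      exact_mod_cast hkey
    linarith
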